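/- arXiv:1406.7174 — 5 statements merged into one kernel-verified Lean document; each statement's English description precedes it below -/
import Mathlib

section
/- Let A be a finite-dimensional commutative algebra over a field K, f ∈ A, and n ≥ dim_K A. Then the saturation (0 : f^∞) equals the kernel of the n-th power of multiplication by f (the 'generalized 0-eigenspace' of multiplication by f), and the localization A_f is isomorphic to the quotient algebra A / ker((·f)^n), with the canonical localization map A → A_f corresponding to the quotient map. -/
/-!
The kernels of the powers of multiplication by `f` form an increasing chain of subspaces of
`A`, which stabilises by the time the exponent reaches `dim_K A`; so `(0 : f^∞) = ker (f^n ·)`.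
Since `A` is Artinian, the localization map `A → A_f` is surjective, and its kernel is exactly
`(0 : f^∞)`, so `A_f ≅ A ⧸ ker (f^n ·)` via the map induced by `A → A_f`.
-/

/-- The ideal `{a : A | g * a = 0}`; for `g = f^n` with `n ≥ dim A` this is the kernel of
the `n`-th power of multiplication by `f`, i.e. the "generalized 0-eigenspace" of `(·f)`. -/
def mulKerIdeal {A : Type*} [CommRing A] (g : A) : Ideal A where
  carrier := {a : A | g * a = 0}
  zero_mem' := by simp
  add_mem' := by
    intro a b ha hb
    simp only [Set.mem_setOf_eq] at *
    rw [mul_add, ha, hb, add_zero]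
  smul_mem' := by
    intro c a ha
    simp only [smul_eq_mul, Set.mem_setOf_eq] at *
    rw [mul_left_comm, ha, mul_zero]

theorem mem_mulKerIdeal {A : Type*} [CommRing A] {g a : A} :
    a ∈ mulKerIdeal g ↔ g * a = 0 := Iff.rfl

theorem exists_pow_mul_eq_zero_iff_of_finrank_le {K A : Type*} [Field K] [Ring A] [Algebra K A]
    [FiniteDimensional K A] (f a : A) {n : ℕ} (hn : Module.finrank K A ≤ n) :
    (∃ k : ℕ, f ^ k * a = 0) ↔ f ^ n * a = 0 := by
  have mem_ker_pow (m : ℕ) : a ∈ LinearMap.ker (LinearMap.mulLeft K f ^ m) ↔ f ^ m * a = 0 := by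
    simp [LinearMap.pow_mulLeft]
  refine ⟨fun ⟨k, hk⟩ => ?_, fun h => ⟨n, h⟩⟩
  rw [← mem_ker_pow, Module.End.ker_pow_eq_ker_pow_finrank_of_le hn]
  exact Module.End.ker_pow_le_ker_pow_finrank _ k ((mem_ker_pow k).2 hk)

theorem ker_algebraMap_eq_mulKerIdeal_of_isLocalizationAway {R S : Type*} [CommRing R]
    [CommRing S] [Algebra R S] {f : R} [IsLocalization.Away f S] {n : ℕ}
    (hsat : ∀ a : R, (∃ k : ℕ, f ^ k * a = 0) ↔ f ^ n * a = 0) :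
    RingHom.ker (algebraMap R S) = mulKerIdeal (f ^ n) := by
  ext a
  rw [RingHom.mem_ker, IsLocalization.map_eq_zero_iff (Submonoid.powers f), mem_mulKerIdeal,
    ← hsat, Subtype.exists]
  simp only [Submonoid.mem_powers_iff, exists_prop, exists_exists_eq_and]

/-- For a finite-dimensional commutative algebra `A` over a field `K`, `f ∈ A` and
`n ≥ dim_K A`: the saturation `(0 : f^∞)` equals `ker((·f)^n)`, and the localization
`A_f` is isomorphic to `A / ker((·f)^n)`, with the canonical localization map
corresponding to the quotient map. -/
theorem localization_away_eq_quotient_generalized_kernel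
    (K : Type*) [Field K] (A : Type*) [CommRing A] [Algebra K A] [FiniteDimensional K A]
    (f : A) (n : ℕ) (hn : Module.finrank K A ≤ n) :
    (∀ a : A, (∃ k : ℕ, f ^ k * a = 0) ↔ f ^ n * a = 0) ∧
    ∃ e : (A ⧸ mulKerIdeal (f ^ n)) ≃ₐ[K] Localization.Away f,
      ∀ a : A, e (Ideal.Quotient.mk _ a) = algebraMap A (Localization.Away f) a := by
  have hsat (a : A) := exists_pow_mul_eq_zero_iff_of_finrank_le (K := K) f a hn
  have : IsArtinianRing A := IsArtinianRing.of_finite K A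
  let φ := IsScalarTower.toAlgHom K A (Localization.Away f)
  have hφ : Function.Surjective φ :=
    IsArtinianRing.localization_surjective (Submonoid.powers f) _
  have hker : RingHom.ker φ = mulKerIdeal (f ^ n) :=
    ker_algebraMap_eq_mulKerIdeal_of_isLocalizationAway hsat
  exact ⟨hsat, (Ideal.quotientEquivAlgOfEq K hker.symm).trans
    (Ideal.quotientKerAlgEquivOfSurjective hφ), fun _ => rfl⟩
end

section
/- Let e_1, …, e_r ∈ ℝ^n positively span ℝ^n, in the sense that for every nonzero u ∈ ℝ^n there exists i with ⟨e_i, u⟩ > 0, and let a_1, …, a_r > 0. Then the function f(u) = Σ a_i exp(⟨e_i, u⟩) tends to +∞ as ‖u‖ → ∞, attains a global minimum at some u* ∈ ℝ^n, and u* is a critical point of f (∇f(u*) = 0). In particular, the Laurent polynomial W(z) = Σ a_i z^{e_i} (with e_i ∈ ℤ^n) has a critical point in (ℝ_{>0})^n, namely z = exp(u*) coordinatewise. -/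
/-!
Let `Lᵢ = ⟨eᵢ, ·⟩`. The positive-spanning hypothesis says that `maxᵢ Lᵢ` is positive on the
unit sphere, so by compactness `maxᵢ Lᵢ u ≥ c ‖u‖` for some `c > 0`. Hence
`f u ≥ (minᵢ aᵢ) exp (c ‖u‖)`, so `f` is coercive and, being continuous on a proper space,
attains its minimum. At the minimum the derivative `∑ aᵢ exp (Lᵢ u) Lᵢ` vanishes; evaluating
it on the basis vectors and substituting `z = exp u` gives `z ∂W/∂zⱼ = 0`.
-/

open Filter

namespace Real

theorem exp_intCast_mul (x : ℝ) (m : ℤ) : exp (m * x) = exp x ^ m := by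
  rw [← rpow_intCast, rpow_def_of_pos (exp_pos x), log_exp, mul_comm]

theorem exp_sum_intCast_mul {ι : Type*} [Fintype ι] (m : ι → ℤ) (x : ι → ℝ) :
    exp (∑ l, (m l : ℝ) * x l) = ∏ l, exp (x l) ^ m l := by
  simp only [exp_sum, exp_intCast_mul]

end Real

section SumExp

variable {E ι : Type*} [NormedAddCommGroup E] [NormedSpace ℝ E] [Fintype ι]

theorem exists_pos_mul_norm_le_of_forall_exists_pos [FiniteDimensional ℝ E]
    (L : ι → E →L[ℝ] ℝ) (hL : ∀ u, u ≠ 0 → ∃ i, 0 < L i u) :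
    ∃ c > 0, ∀ u, u ≠ 0 → ∃ i, c * ‖u‖ ≤ L i u := by
  by_cases hE : ∀ u : E, u = 0
  · exact ⟨1, one_pos, fun u hu => absurd (hE u) hu⟩
  obtain ⟨u₁, hu₁⟩ := not_forall.mp hE
  have : Nontrivial E := nontrivial_of_ne u₁ 0 hu₁
  have hι : (Finset.univ : Finset ι).Nonempty := ⟨(hL u₁ hu₁).choose, Finset.mem_univ _⟩
  set φ : E → ℝ := fun u => Finset.univ.sup' hι fun i => L i u
  have hφ : Continuous φ := Continuous.finset_sup'_apply hι fun i _ => (L i).continuous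
  obtain ⟨v, hv, hvmin⟩ := (isCompact_sphere (0 : E) 1).exists_isMinOn
    (NormedSpace.sphere_nonempty.mpr zero_le_one) hφ.continuousOn
  have hv0 : v ≠ 0 := ne_zero_of_mem_unit_sphere ⟨v, hv⟩
  obtain ⟨iv, hiv⟩ := hL v hv0
  refine ⟨φ v, hiv.trans_le (Finset.le_sup' (fun i => L i v) (Finset.mem_univ iv)), fun u hu => ?_⟩
  have hnu : 0 < ‖u‖ := norm_pos_iff.mpr hu
  have hw : ‖u‖⁻¹ • u ∈ Metric.sphere (0 : E) 1 := by
    simp [norm_smul, hnu.ne']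
  obtain ⟨i, -, hi⟩ := Finset.exists_mem_eq_sup' hι fun i => L i (‖u‖⁻¹ • u)
  refine ⟨i, ?_⟩
  have hle : φ v ≤ ‖u‖⁻¹ * L i u := calc
    φ v ≤ φ (‖u‖⁻¹ • u) := hvmin hw
    _ = ‖u‖⁻¹ * L i u := by simp only [φ, hi, map_smul, smul_eq_mul]
  calc φ v * ‖u‖ ≤ ‖u‖⁻¹ * L i u * ‖u‖ := by gcongr
    _ = L i u := by field_simp

theorem tendsto_sum_mul_exp_cobounded [FiniteDimensional ℝ E] (a : ι → ℝ)
    (L : ι → E →L[ℝ] ℝ) (ha : ∀ i, 0 < a i) (hL : ∀ u, u ≠ 0 → ∃ i, 0 < L i u) :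
    Tendsto (fun u => ∑ i, a i * Real.exp (L i u)) (Bornology.cobounded E) atTop := by
  obtain ⟨c, hc, hcL⟩ := exists_pos_mul_norm_le_of_forall_exists_pos L hL
  have hnorm : Tendsto (‖·‖) (Bornology.cobounded E) atTop := tendsto_norm_cobounded_atTop
  have hterm : ∀ i, Tendsto (fun u => a i * Real.exp (c * ‖u‖)) (Bornology.cobounded E) atTop :=
    fun i => (Real.tendsto_exp_atTop.comp (hnorm.const_mul_atTop hc)).const_mul_atTop (ha i)
  refine tendsto_atTop.mpr fun M => ?_
  filter_upwards [eventually_all.mpr fun i => (hterm i).eventually_ge_atTop M,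
    hnorm.eventually_gt_atTop 0] with u hM hu
  obtain ⟨i, hi⟩ := hcL u (norm_pos_iff.mp hu)
  calc M ≤ a i * Real.exp (c * ‖u‖) := hM i
    _ ≤ a i * Real.exp (L i u) := by gcongr; exact (ha i).le
    _ ≤ ∑ i, a i * Real.exp (L i u) :=
      Finset.single_le_sum (f := fun j => a j * Real.exp (L j u))
        (fun j _ => (mul_pos (ha j) (Real.exp_pos _)).le) (Finset.mem_univ i)

theorem hasFDerivAt_sum_mul_exp (a : ι → ℝ) (L : ι → E →L[ℝ] ℝ) (u : E) :
    HasFDerivAt (fun u => ∑ i, a i * Real.exp (L i u))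
      (∑ i, (a i * Real.exp (L i u)) • L i) u := by
  refine HasFDerivAt.fun_sum fun i _ => ?_
  simpa [smul_smul] using ((L i).hasFDerivAt.exp).const_mul (a i)

theorem IsLocalMin.sum_smul_eq_zero_of_sum_mul_exp {a : ι → ℝ} {L : ι → E →L[ℝ] ℝ} {u₀ : E}
    (h : IsLocalMin (fun u => ∑ i, a i * Real.exp (L i u)) u₀) :
    ∑ i, (a i * Real.exp (L i u₀)) • L i = 0 :=
  (hasFDerivAt_sum_mul_exp a L u₀).fderiv ▸ h.fderiv_eq_zero

end SumExp

/-- Galkin's existence step: if `e_1,…,e_r ∈ ℤ^n` positively span `ℝ^n` (for every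
`u ≠ 0` some `⟨e_i,u⟩ > 0`) and `a_i > 0`, then `f(u) = Σ a_i exp(⟨e_i,u⟩)` tends to
`+∞` as `‖u‖ → ∞`, attains a global minimum at some critical point `u₀`, and hence the
Laurent polynomial `W(z) = Σ a_i z^{e_i}` has a critical point with positive real
coordinates, namely `z = exp(u₀)` coordinatewise. -/
theorem sum_exp_has_critical_point (n r : ℕ) (e : Fin r → Fin n → ℤ)
    (a : Fin r → ℝ) (ha : ∀ i, 0 < a i)
    (hspan : ∀ u : Fin n → ℝ, u ≠ 0 → ∃ i, 0 < ∑ j, (e i j : ℝ) * u j) :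
    Tendsto (fun u : Fin n → ℝ => ∑ i, a i * Real.exp (∑ j, (e i j : ℝ) * u j))
        (Filter.comap norm Filter.atTop) Filter.atTop ∧
    ∃ u₀ : Fin n → ℝ,
      (∀ u : Fin n → ℝ,
        (∑ i, a i * Real.exp (∑ j, (e i j : ℝ) * u₀ j)) ≤
          ∑ i, a i * Real.exp (∑ j, (e i j : ℝ) * u j)) ∧
      fderiv ℝ (fun u : Fin n → ℝ => ∑ i, a i * Real.exp (∑ j, (e i j : ℝ) * u j)) u₀ = 0 ∧
      (∀ l : Fin n, 0 < Real.exp (u₀ l)) ∧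
      (∀ j : Fin n, ∑ i, a i * (e i j : ℝ) * ∏ l, (Real.exp (u₀ l)) ^ (e i l) = 0) := by
  set L : Fin r → (Fin n → ℝ) →L[ℝ] ℝ := fun i => ∑ j, (e i j : ℝ) • ContinuousLinearMap.proj j
  have hL : ∀ i u, L i u = ∑ j, (e i j : ℝ) * u j := fun i u => by simp [L]
  have htend := tendsto_sum_mul_exp_cobounded a L ha (by simpa only [hL] using hspan)
  have hcont : Continuous fun u => ∑ i, a i * Real.exp (L i u) := by fun_prop
  obtain ⟨u₀, hmin⟩ := hcont.exists_forall_le (by rwa [← Metric.cobounded_eq_cocompact])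
  have hlocal : IsLocalMin (fun u => ∑ i, a i * Real.exp (L i u)) u₀ := .of_forall hmin
  refine ⟨by simpa only [hL, comap_norm_atTop] using htend, u₀, by simpa only [hL] using hmin,
    by simpa only [hL] using hlocal.fderiv_eq_zero, fun l => Real.exp_pos _, fun j => ?_⟩
  have hcrit := congrArg (fun T => T (Pi.single j 1)) hlocal.sum_smul_eq_zero_of_sum_mul_exp
  simpa [hL, Pi.single_apply, ← Real.exp_sum_intCast_mul, mul_assoc, mul_comm, mul_left_comm]
    using hcrit
end

section
/- Let K be a field, R = K[x_1, …, x_r], and φ : R → A a surjective K-algebra homomorphism onto a finite-dimensional K-algebra A, with ker φ generated by p_1, …, p_m ∈ R. Let R̂ = R[[t]] (power series in t over R), let B be a K[[t]]-algebra that is free of finite rank as a K[[t]]-module, and let ψ : R̂ → B be a continuous K[[t]]-algebra homomorphism whose reduction modulo t is identified with φ (via an isomorphism B/tB ≅ A compatible with ψ mod t). Suppose there exist elements P_j = p_j + q_j ∈ ker ψ with q_j ∈ t·R̂ for j = 1, …, m. Then ψ is surjective and ker ψ is generated by P_1, …, P_m; in particular B ≅ R[[t]]/(P_1, …, P_m).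 -/
/-!
`t` lies in the Jacobson radical of `R[[t]]` (every `1 + t f` is a unit), so by Nakayama's lemma
`M ⊆ N + t M` forces `M ⊆ N` whenever `M` is a finitely generated `R[[t]]`-module.
For `M = B`, finite over `K[[t]]`, and `N = ψ(R[[t]])`, the hypothesis holds because `φ` is onto.
For `M = ker ψ`, finitely generated since `R[[t]]` is Noetherian, and `N = (P)`: the constant term
of `f ∈ ker ψ` lies in `ker φ = (p)`, so `f = ∑ aⱼ Pⱼ + t g`, and `g ∈ ker ψ` because `t` is a
non-zero-divisor on the free `K[[t]]`-module `B`.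
-/

open PowerSeries Ideal

section Nakayama

variable {S B : Type*} [CommRing S] [CommRing B] {ψ : S →+* B} {x : S}

theorem RingHom.surjective_of_surjective_mod_of_mem_jacobson (hψ : ψ.Finite)
    (hx : x ∈ jacobson ⊥) (h : Function.Surjective ((Ideal.Quotient.mk (span {ψ x})).comp ψ)) :
    Function.Surjective ψ := by
  let := ψ.toAlgebra
  have : Module.Finite S B := hψ
  have hmod : (⊤ : Submodule S B) ≤ LinearMap.range (Algebra.linearMap S B) ⊔ span {x} • ⊤ := by
    intro b _
    obtain ⟨s, hs⟩ := h (Ideal.Quotient.mk _ b)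
    obtain ⟨c, hc⟩ := mem_span_singleton'.mp (Ideal.Quotient.eq.mp hs.symm)
    refine Submodule.mem_sup.mpr ⟨ψ s, ⟨s, rfl⟩, x • c,
      Submodule.smul_mem_smul (mem_span_singleton_self x) trivial, ?_⟩
    rw [Algebra.smul_def, RingHom.algebraMap_toAlgebra, mul_comm, hc, add_sub_cancel]
  have hrange := Submodule.le_of_le_smul_of_le_jacobson_bot Module.Finite.fg_top
    (span_singleton_le_iff_mem _ |>.mpr hx) hmod
  exact fun b => hrange trivial

theorem RingHom.ker_eq_of_ker_le_sup_of_mem_jacobson [IsNoetherianRing S]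
    (hx : x ∈ jacobson ⊥) (hreg : IsLeftRegular (ψ x)) {I : Ideal S} (hI : I ≤ ker ψ)
    (h : ker ψ ≤ I ⊔ span {x}) : ker ψ = I := by
  refine le_antisymm (Submodule.le_of_le_smul_of_le_jacobson_bot (IsNoetherian.noetherian _)
    (span_singleton_le_iff_mem _ |>.mpr hx) fun f hf => ?_) hI
  obtain ⟨i, hi, y, hy, rfl⟩ := Submodule.mem_sup.mp (h hf)
  obtain ⟨g, rfl⟩ := mem_span_singleton'.mp hy
  have hψi : ψ i = 0 := hI hi
  have hg : ψ g = 0 := hreg (by simpa [hψi, mul_comm] using hf)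
  refine Submodule.add_mem_sup hi ?_
  rw [smul_eq_mul, mul_comm g]
  exact mul_mem_mul (mem_span_singleton_self x) hg

end Nakayama

theorem PowerSeries.X_mem_jacobson_bot (R : Type*) [CommRing R] : (X : R⟦X⟧) ∈ jacobson ⊥ :=
  mem_jacobson_bot.mpr fun y => isUnit_iff_constantCoeff.mpr (by simp)

theorem PowerSeries.quotient_mk_map_eq_map_C_constantCoeff {R B : Type*} [CommRing R] [CommRing B]
    (ψ : R⟦X⟧ →+* B) (f : R⟦X⟧) :
    Ideal.Quotient.mk (span {ψ X}) (ψ f) = Ideal.Quotient.mk _ (ψ (C (constantCoeff f))) := by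
  obtain ⟨g, hg⟩ := X_dvd_iff.mpr (show constantCoeff (f - C (constantCoeff f)) = 0 by simp)
  refine Ideal.Quotient.eq.mpr (mem_span_singleton.mpr ⟨ψ g, ?_⟩)
  rw [← map_sub, hg, map_mul]

theorem PowerSeries.mem_span_range_sup_span_X {R ι : Type*} [CommRing R]
    {p : ι → R} {P : ι → R⟦X⟧}
    (hP : ∀ j, P j - C (p j) ∈ span {X}) {f : R⟦X⟧} (hf : constantCoeff f ∈ span (Set.range p)) :
    f ∈ span (Set.range P) ⊔ span {X} := by
  have hCp : span (Set.range (C ∘ p)) ≤ span (Set.range P) ⊔ span {X} := by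
    refine span_le.mpr ?_
    rintro _ ⟨j, rfl⟩
    simpa using Submodule.sub_mem_sup (subset_span (Set.mem_range_self (f := P) j)) (hP j)
  have hC : C (constantCoeff f) ∈ span (Set.range P) ⊔ span {X} :=
    hCp <| by simpa [map_span, ← Set.range_comp] using mem_map_of_mem C hf
  have hX : f - C (constantCoeff f) ∈ span {X} := mem_span_singleton.mpr (X_dvd_iff.mpr (by simp))
  simpa using add_mem hC (mem_sup_right hX)

theorem isLeftRegular_algebraMap_of_ne_zero {R B : Type*} [CommRing R] [IsDomain R] [Ring B]
    [Algebra R B] [Module.IsTorsionFree R B] {r : R} (hr : r ≠ 0) :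
    IsLeftRegular (algebraMap R B r) := by
  simpa [IsLeftRegular, ← Algebra.smul_def] using smul_right_injective B hr

theorem mcduff_tolman_presentation_trick_general
    (K : Type) [Field K] (r m : ℕ)
    (A : Type) [CommRing A] [Algebra K A]
    (φ : MvPolynomial (Fin r) K →ₐ[K] A) (hφ : Function.Surjective φ)
    (p : Fin m → MvPolynomial (Fin r) K)
    (hker : RingHom.ker (φ : MvPolynomial (Fin r) K →+* A) = Ideal.span (Set.range p))
    (B : Type) [CommRing B] [Algebra (PowerSeries K) B]
    [Module.Free (PowerSeries K) B] [Module.Finite (PowerSeries K) B]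
    [Algebra K B]
    (ψ : PowerSeries (MvPolynomial (Fin r) K) →+* B)
    -- `ψ` is a `K[[t]]`-algebra homomorphism:
    (hψalg : ∀ g : PowerSeries K,
      ψ (PowerSeries.map (algebraMap K (MvPolynomial (Fin r) K)) g) =
        algebraMap (PowerSeries K) B g)
    -- the reduction of `ψ` mod `t` is identified with `φ` via `θ : B/tB ≅ A`:
    (θ : (B ⧸ Ideal.span {algebraMap (PowerSeries K) B PowerSeries.X}) ≃ₐ[K] A)
    (hθ : ∀ x : MvPolynomial (Fin r) K,
      θ (Ideal.Quotient.mk _ (ψ (PowerSeries.C x : PowerSeries (MvPolynomial (Fin r) K)))) = φ x)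
    (P : Fin m → PowerSeries (MvPolynomial (Fin r) K))
    (hPker : ∀ j, ψ (P j) = 0)
    (hPq : ∀ j, P j - (PowerSeries.C (p j) : PowerSeries (MvPolynomial (Fin r) K)) ∈
      Ideal.span {(PowerSeries.X : PowerSeries (MvPolynomial (Fin r) K))}) :
    Function.Surjective ψ ∧
    RingHom.ker ψ = Ideal.span (Set.range P) ∧
    Nonempty ((PowerSeries (MvPolynomial (Fin r) K) ⧸ Ideal.span (Set.range P)) ≃+* B) := by
  have hψX : ψ X = algebraMap (PowerSeries K) B X := by simpa using hψalg X
  have hfin : ψ.Finite := RingHom.Finite.of_comp_finite (f := map (algebraMap K _)) <| by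
    rw [show ψ.comp _ = algebraMap (PowerSeries K) B from RingHom.ext hψalg]
    exact RingHom.finite_algebraMap.mpr ‹_›
  have hsurj : Function.Surjective ψ := by
    refine RingHom.surjective_of_surjective_mod_of_mem_jacobson hfin
      (X_mem_jacobson_bot (MvPolynomial (Fin r) K)) ?_
    rw [hψX]
    intro q
    obtain ⟨x, hx⟩ := hφ (θ q)
    exact ⟨C x, θ.injective (by simpa [hθ] using hx)⟩
  have hkerP : RingHom.ker ψ = span (Set.range P) := by
    have hreg : IsLeftRegular (ψ X) := by
      rw [hψX]
      exact isLeftRegular_algebraMap_of_ne_zero X_ne_zero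
    have hP : span (Set.range P) ≤ RingHom.ker ψ := span_le.mpr <| by
      rintro _ ⟨j, rfl⟩
      exact hPker j
    refine RingHom.ker_eq_of_ker_le_sup_of_mem_jacobson
      (X_mem_jacobson_bot (MvPolynomial (Fin r) K)) hreg hP fun f hf =>
        mem_span_range_sup_span_X hPq ?_
    have hred := quotient_mk_map_eq_map_C_constantCoeff ψ f
    rw [hψX, RingHom.mem_ker.mp hf, map_zero] at hred
    rw [← hker, RingHom.mem_ker, AlgHom.coe_toRingHom, ← hθ, ← hred, map_zero]
  exact ⟨hsurj, hkerP, ⟨hkerP ▸ RingHom.quotientKerEquivOfSurjective hsurj⟩⟩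

/-- McDuff–Tolman algebraic trick. Let `φ : R = K[x_1,…,x_r] → A` be a surjective
`K`-algebra map onto a finite-dimensional algebra, with kernel generated by
`p_1,…,p_m`. Let `B` be a `K[[t]]`-algebra, free of finite rank as a `K[[t]]`-module,
and `ψ : R[[t]] → B` a continuous `K[[t]]`-algebra homomorphism (continuity for the
`t`-adic topologies) whose reduction mod `t` is identified with `φ` via an isomorphism
`θ : B/tB ≅ A`. If there are `P_j = p_j + q_j ∈ ker ψ` with `q_j ∈ t·R[[t]]`, then
`ψ` is surjective with kernel generated by the `P_j`; in particular
`B ≅ R[[t]]/(P_1,…,P_m)`. -/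
theorem mcduff_tolman_presentation_trick
    (K : Type) [Field K] (r m : ℕ)
    (A : Type) [CommRing A] [Algebra K A] [FiniteDimensional K A]
    (φ : MvPolynomial (Fin r) K →ₐ[K] A) (hφ : Function.Surjective φ)
    (p : Fin m → MvPolynomial (Fin r) K)
    (hker : RingHom.ker (φ : MvPolynomial (Fin r) K →+* A) = Ideal.span (Set.range p))
    (B : Type) [CommRing B] [Algebra (PowerSeries K) B]
    [Module.Free (PowerSeries K) B] [Module.Finite (PowerSeries K) B]
    [Algebra K B] [IsScalarTower K (PowerSeries K) B]
    (ψ : PowerSeries (MvPolynomial (Fin r) K) →+* B)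
    -- `ψ` is a `K[[t]]`-algebra homomorphism:
    (hψalg : ∀ g : PowerSeries K,
      ψ (PowerSeries.map (algebraMap K (MvPolynomial (Fin r) K)) g) =
        algebraMap (PowerSeries K) B g)
    -- `ψ` is continuous for the `t`-adic topologies:
    (hcont : ∀ k : ℕ, ∃ N : ℕ,
      ∀ x ∈ (Ideal.span {(PowerSeries.X : PowerSeries (MvPolynomial (Fin r) K))}) ^ N,
        ψ x ∈ (Ideal.span {algebraMap (PowerSeries K) B PowerSeries.X}) ^ k)
    -- the reduction of `ψ` mod `t` is identified with `φ` via `θ : B/tB ≅ A`: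
    (θ : (B ⧸ Ideal.span {algebraMap (PowerSeries K) B PowerSeries.X}) ≃ₐ[K] A)
    (hθ : ∀ x : MvPolynomial (Fin r) K,
      θ (Ideal.Quotient.mk _ (ψ (PowerSeries.C x : PowerSeries (MvPolynomial (Fin r) K)))) = φ x)
    (P : Fin m → PowerSeries (MvPolynomial (Fin r) K))
    (hPker : ∀ j, ψ (P j) = 0)
    (hPq : ∀ j, P j - (PowerSeries.C (p j) : PowerSeries (MvPolynomial (Fin r) K)) ∈
      Ideal.span {(PowerSeries.X : PowerSeries (MvPolynomial (Fin r) K))}) :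
    Function.Surjective ψ ∧
    RingHom.ker ψ = Ideal.span (Set.range P) ∧
    Nonempty ((PowerSeries (MvPolynomial (Fin r) K) ⧸ Ideal.span (Set.range P)) ≃+* B) :=
  mcduff_tolman_presentation_trick_general K r m A φ hφ p hker B ψ hψalg θ hθ P hPker hPq
end

section
/- Let K be a field, let m ≥ k ≥ 1 be integers with the characteristic of K not dividing k, and let t ∈ K be nonzero. Define W : (K^×)^{m+1} → K by W(z_1, …, z_{m+1}) = z_1 + ⋯ + z_m + t^k·z_1^{-1}⋯z_m^{-1}·z_{m+1}^k + z_{m+1}. Then a point p ∈ (K^×)^{m+1} is a critical point of W (all Laurent partial derivatives vanish at p) if and only if p = (w, w, …, w, −kw) for some w ∈ K^× with w^{1+m−k} = (−k)^k·t^k; and in that case W(p) = (1 + m − k)·w. -/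
/-!
Write `Y` for the value of the monomial `t^k z₁⁻¹⋯z_m⁻¹ z_{m+1}^k` at `p = (p₁,…,p_m,q)`.
Since `z ∂_z` of a monomial is its exponent times itself, the critical equations say exactly
`pⱼ = Y` for all `j` and `q = -k Y`. At a point `(w,…,w,-kw)` one has
`Y = (-k)^k t^k w^k / w^m`, so `Y = w` is the equation `w^{1+m-k} = (-k)^k t^k`, and then
`W(p) = m w + w - k w`.
-/

def fiberMonomial {K ι : Type*} [Field K] [Fintype ι] (t : K) (k : ℕ) (p : ι → K) (q : K) : K :=
  t ^ k * (∏ i, (p i)⁻¹) * q ^ k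

section

variable {K : Type*} [Field K]

theorem natCast_mul_mul_pow_sub_one_add_one_eq_zero_iff {n : ℕ} (hn : 1 ≤ n) {c q : K}
    (hq : q ≠ 0) : (n : K) * c * q ^ (n - 1) + 1 = 0 ↔ q = -(n : K) * (c * q ^ n) := by
  have hmul : ((n : K) * c * q ^ (n - 1) + 1) * q = n * (c * q ^ n) + q := by
    rw [← pow_sub_one_mul (by omega : n ≠ 0) q]
    ring
  rw [← mul_left_inj' hq, zero_mul, hmul]
  constructor <;> intro h <;> linear_combination h

variable {ι : Type*} [Fintype ι]

theorem critical_equations_iff {k : ℕ} (hk : 1 ≤ k) {t q : K} {p : ι → K}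
    (hp : ∀ i, p i ≠ 0) (hq : q ≠ 0) :
    ((∀ j, 1 - t ^ k * (∏ i, (p i)⁻¹) * (p j)⁻¹ * q ^ k = 0) ∧
        (k : K) * t ^ k * (∏ i, (p i)⁻¹) * q ^ (k - 1) + 1 = 0) ↔
      (∀ j, p j = fiberMonomial t k p q) ∧ q = -(k : K) * fiberMonomial t k p q := by
  refine and_congr (forall_congr' fun j => ?_) ?_
  · rw [sub_eq_zero, eq_comm, show t ^ k * (∏ i, (p i)⁻¹) * (p j)⁻¹ * q ^ k =
      fiberMonomial t k p q * (p j)⁻¹ by unfold fiberMonomial; ring, mul_inv_eq_one₀ (hp j),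
      eq_comm]
  · rw [mul_assoc (k : K)]
    exact natCast_mul_mul_pow_sub_one_add_one_eq_zero_iff hk hq

theorem fiberMonomial_const_eq_self_iff {k : ℕ} (hk : k ≤ Fintype.card ι + 1) {t w : K}
    (hw : w ≠ 0) :
    fiberMonomial t k (fun _ : ι => w) (-(k : K) * w) = w ↔
      w ^ (1 + Fintype.card ι - k) = (-(k : K)) ^ k * t ^ k := by
  have hwk : w ^ k ≠ 0 := pow_ne_zero k hw
  have hsplit : w * w ^ Fintype.card ι = w ^ (1 + Fintype.card ι - k) * w ^ k := by
    rw [← pow_succ', ← pow_add]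
    congr 1
    omega
  rw [fiberMonomial, Finset.prod_const, Finset.card_univ, inv_pow, mul_pow,
    ← div_eq_mul_inv, div_mul_eq_mul_div, div_eq_iff (pow_ne_zero _ hw), hsplit]
  constructor
  · intro h
    exact mul_right_cancel₀ hwk (by linear_combination -h)
  · intro h
    rw [h]
    ring

end

theorem superpotential_critical_points_O_minus_k_general
    (K : Type*) [Field K] (k m : ℕ) (hk : 1 ≤ k) (hkm : k ≤ m)
    (t : K)
    (p : Fin m → K) (hp : ∀ i, p i ≠ 0) (q : K) (hq : q ≠ 0) :
    (((∀ j : Fin m, 1 - t ^ k * (∏ i, (p i)⁻¹) * (p j)⁻¹ * q ^ k = 0) ∧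
        (k : K) * t ^ k * (∏ i, (p i)⁻¹) * q ^ (k - 1) + 1 = 0) ↔
      ∃ w : K, (∀ i, p i = w) ∧ q = -(k : K) * w ∧
        w ^ (1 + m - k) = (-(k : K)) ^ k * t ^ k) ∧
    (∀ w : K, (∀ i, p i = w) → q = -(k : K) * w →
      w ^ (1 + m - k) = (-(k : K)) ^ k * t ^ k →
      (∑ i, p i) + t ^ k * (∏ i, (p i)⁻¹) * q ^ k + q = ((1 + m - k : ℕ) : K) * w) := by
  have hkm' : k ≤ Fintype.card (Fin m) + 1 := by rw [Fintype.card_fin]; omega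
  have const_point_eq_self_iff := fun {w : K} (hw : w ≠ 0) =>
    Fintype.card_fin m ▸ fiberMonomial_const_eq_self_iff (t := t) hkm' hw
  have ne_zero_of_eq {w : K} (hqw : q = -(k : K) * w) : w ≠ 0 := by
    rintro rfl
    exact hq (by simpa using hqw)
  refine ⟨(critical_equations_iff hk hp hq).trans ⟨?_, ?_⟩, ?_⟩
  · rintro ⟨hpY, hqY⟩
    refine ⟨_, hpY, hqY, (const_point_eq_self_iff (ne_zero_of_eq hqY)).1 ?_⟩
    rw [← hqY, ← funext hpY]
  · rintro ⟨w, hpw, rfl, hw⟩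
    obtain rfl : p = fun _ => w := funext hpw
    have hY := (const_point_eq_self_iff (ne_zero_of_eq rfl)).2 hw
    exact ⟨fun _ => hY.symm, by rw [hY]⟩
  · rintro w hpw rfl hw
    obtain rfl : p = fun _ => w := funext hpw
    change _ + fiberMonomial t k (fun _ => w) _ + _ = _
    rw [(const_point_eq_self_iff (ne_zero_of_eq rfl)).2 hw, Finset.sum_const, Finset.card_univ,
      Fintype.card_fin, nsmul_eq_mul, Nat.cast_sub (by omega)]
    push_cast
    ring

/-- Critical points of the superpotential
`W(z) = z₁ + ⋯ + z_m + t^k·z₁⁻¹⋯z_m⁻¹·z_{m+1}^k + z_{m+1}` of `O_{P^m}(−k)`: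
a point `(p₁,…,p_m,q) ∈ (K^×)^{m+1}` is critical (all Laurent partial derivatives
vanish there) iff it equals `(w,…,w,−kw)` for some `w` with
`w^{1+m−k} = (−k)^k·t^k`; and in that case `W(p) = (1+m−k)·w`. -/
theorem superpotential_critical_points_O_minus_k
    (K : Type*) [Field K] (k m : ℕ) (hk : 1 ≤ k) (hkm : k ≤ m)
    (hchar : (k : K) ≠ 0) (t : K) (ht : t ≠ 0)
    (p : Fin m → K) (hp : ∀ i, p i ≠ 0) (q : K) (hq : q ≠ 0) :
    (((∀ j : Fin m, 1 - t ^ k * (∏ i, (p i)⁻¹) * (p j)⁻¹ * q ^ k = 0) ∧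
        (k : K) * t ^ k * (∏ i, (p i)⁻¹) * q ^ (k - 1) + 1 = 0) ↔
      ∃ w : K, (∀ i, p i = w) ∧ q = -(k : K) * w ∧
        w ^ (1 + m - k) = (-(k : K)) ^ k * t ^ k) ∧
    (∀ w : K, (∀ i, p i = w) → q = -(k : K) * w →
      w ^ (1 + m - k) = (-(k : K)) ^ k * t ^ k →
      (∑ i, p i) + t ^ k * (∏ i, (p i)⁻¹) * q ^ k + q = ((1 + m - k : ℕ) : K) * w) :=
  superpotential_critical_points_O_minus_k_general K k m hk hkm t p hp q hq
end

section
/- Let K be a field and t ∈ K nonzero. Let W = z_1 + ⋯ + z_m + t·z_1^{-1}z_2^{-1}⋯z_m^{-1} in the Laurent polynomial ring K[z_1^{±1}, …, z_m^{±1}]. Then the Jacobian ring Jac(W) = K[z_1^{±1},…,z_m^{±1}]/(∂_{z_1}W, …, ∂_{z_m}W) is isomorphic as a K-algebra to K[x]/(x^{m+1} − t), via the map sending each z_i to x. -/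
open Polynomial

/-- The formal partial derivative `∂_{z_j}` on the multivariate Laurent polynomial ring
`K[z_1^{±1},…,z_n^{±1}] = AddMonoidAlgebra K (Fin n →₀ ℤ)`. -/
noncomputable def laurentDeriv {K : Type*} [CommRing K] {n : ℕ} (j : Fin n)
    (W : AddMonoidAlgebra K (Fin n →₀ ℤ)) : AddMonoidAlgebra K (Fin n →₀ ℤ) :=
  AddMonoidAlgebra.ofCoeff
    (Finsupp.sum W.coeff fun e a => Finsupp.single (e - Finsupp.single j 1) (a * (e j : K)))

/-- The superpotential `W = z₁ + ⋯ + z_m + t·z₁⁻¹z₂⁻¹⋯z_m⁻¹` of `P^m` as a Laurent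
polynomial. -/
noncomputable def projSpaceSuperpotential (K : Type*) [CommRing K] (m : ℕ) (t : K) :
    AddMonoidAlgebra K (Fin m →₀ ℤ) :=
  (∑ i : Fin m, AddMonoidAlgebra.single (Finsupp.single i (1 : ℤ)) (1 : K)) +
    AddMonoidAlgebra.single (-∑ i : Fin m, Finsupp.single i (1 : ℤ)) t

/-!
Modulo the Jacobian ideal, `∂_{z_j} W = 1 - t z^{-(1,…,1)} z_j⁻¹` forces every `z_j` to equal
`y = t z^{-(1,…,1)}`, and then `y^{m+1} = (z₁ ⋯ z_m) · y = t`; so `x ↦ y` defines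
`K[x]/(x^{m+1} - t) → Jac(W)`. Conversely, since the root `x` is a unit with `x^{m+1} = t`,
`z^e ↦ x^{e₁ + ⋯ + e_m}` kills every `∂_{z_j} W`. Both composites fix the generators.
-/

section LaurentPolynomialRing

open AddMonoidAlgebra

variable {K S ι : Type*} [CommRing K] [CommRing S] [Algebra K S]

theorem laurent_algHom_ext {f g : AddMonoidAlgebra K (ι →₀ ℤ) →ₐ[K] S}
    (h : ∀ i, f (single (Finsupp.single i 1) 1) = g (single (Finsupp.single i 1) 1)) : f = g := by
  apply (lift K S (ι →₀ ℤ)).symm.injective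
  ext i : 1
  exact MonoidHom.ext_mint (h i)

noncomputable def diagLift (u : Sˣ) : AddMonoidAlgebra K (ι →₀ ℤ) →ₐ[K] S :=
  lift K S _ ((Units.coeHom S).comp
    ((zpowersHom Sˣ u).comp (AddMonoidHom.toMultiplicative Finsupp.degree)))

theorem diagLift_single (u : Sˣ) (e : ι →₀ ℤ) (a : K) :
    diagLift u (single e a) = a • (↑(u ^ e.degree) : S) :=
  lift_single _ _ _

theorem diagLift_single_of_pow_eq {u : Sˣ} {k : ℕ} {t : K} (hu : (u : S) ^ k = algebraMap K S t)
    (e : ι →₀ ℤ) : diagLift u (single e t) = ↑(u ^ (e.degree + k)) := by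
  rw [diagLift_single, Algebra.smul_def, ← hu, zpow_add, zpow_natCast, Units.val_mul,
    Units.val_pow_eq_pow_val, mul_comm]

end LaurentPolynomialRing

section LaurentDeriv

open AddMonoidAlgebra

variable {K : Type*} [CommRing K] {n : ℕ}

theorem laurentDeriv_single (j : Fin n) (e : Fin n →₀ ℤ) (a : K) :
    laurentDeriv j (single e a) = single (e - Finsupp.single j 1) (a * (e j : K)) := by
  rw [laurentDeriv, coeff_single, Finsupp.sum_single_index (by simp)]
  rfl

theorem laurentDeriv_add (j : Fin n) (W₁ W₂ : AddMonoidAlgebra K (Fin n →₀ ℤ)) :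
    laurentDeriv j (W₁ + W₂) = laurentDeriv j W₁ + laurentDeriv j W₂ := by
  rw [laurentDeriv, AddMonoidAlgebra.coeff_add,
    Finsupp.sum_add_index' (by simp) (by intros; simp [add_mul, Finsupp.single_add])]
  rfl

theorem laurentDeriv_sum {α : Type*} (j : Fin n) (s : Finset α)
    (W : α → AddMonoidAlgebra K (Fin n →₀ ℤ)) :
    laurentDeriv j (∑ i ∈ s, W i) = ∑ i ∈ s, laurentDeriv j (W i) :=
  map_sum (AddMonoidHom.mk' (laurentDeriv j) (laurentDeriv_add j)) W s

theorem laurentDeriv_projSpaceSuperpotential {m : ℕ} (t : K) (j : Fin m) :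
    laurentDeriv j (projSpaceSuperpotential K m t) =
      1 - single (-∑ i : Fin m, Finsupp.single i 1 - Finsupp.single j 1) t := by
  classical
  simp only [projSpaceSuperpotential, laurentDeriv_add, laurentDeriv_sum, laurentDeriv_single]
  rw [Finset.sum_eq_single j (fun i _ hij => by simp [Ne.symm hij]) (by simp)]
  simp [one_def, sub_eq_add_neg]

noncomputable abbrev jacobianIdeal {n : ℕ} (W : AddMonoidAlgebra K (Fin n →₀ ℤ)) :
    Ideal (AddMonoidAlgebra K (Fin n →₀ ℤ)) :=
  Ideal.span (Set.range fun j => laurentDeriv j W)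

end LaurentDeriv

section AdjoinRoot

variable {K : Type*} [CommRing K]

theorem AdjoinRoot.root_X_pow_sub_C_pow (k : ℕ) (t : K) :
    root (X ^ k - C t) ^ k = algebraMap K (AdjoinRoot (X ^ k - C t)) t := by
  rw [← sub_eq_zero, algebraMap_eq, ← mk_C, ← mk_X, ← map_pow, ← map_sub, mk_self]

theorem AdjoinRoot.isUnit_root_X_pow_sub_C {k : ℕ} {t : K} (ht : IsUnit t) (hk : k ≠ 0) :
    IsUnit (root (X ^ k - C t)) :=
  (isUnit_pow_iff hk).1 (AdjoinRoot.root_X_pow_sub_C_pow k t ▸ ht.map _)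

end AdjoinRoot

namespace projSpaceSuperpotential

open AddMonoidAlgebra

variable {K : Type*} [CommRing K] {m : ℕ} {t : K}

theorem jacobianIdeal_le_ker_diagLift {S : Type*} [CommRing S] [Algebra K S] {u : Sˣ}
    (hu : (u : S) ^ (m + 1) = algebraMap K S t) :
    jacobianIdeal (projSpaceSuperpotential K m t) ≤ RingHom.ker (diagLift u) := by
  refine Ideal.span_le.2 ?_
  rintro _ ⟨j, rfl⟩
  dsimp only
  rw [SetLike.mem_coe, RingHom.mem_ker, laurentDeriv_projSpaceSuperpotential, map_sub, map_one,
    diagLift_single_of_pow_eq hu]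
  simp

local notation "q" => Ideal.Quotient.mk (jacobianIdeal (projSpaceSuperpotential K m t))

theorem mk_single_neg_sub_single (j : Fin m) :
    q (single (-∑ i : Fin m, Finsupp.single i 1 - Finsupp.single j 1) t) = 1 := by
  have hj : laurentDeriv j (projSpaceSuperpotential K m t) ∈ jacobianIdeal _ :=
    Ideal.subset_span ⟨j, rfl⟩
  rw [← Ideal.Quotient.eq_zero_iff_mem, laurentDeriv_projSpaceSuperpotential, map_sub, map_one,
    sub_eq_zero] at hj
  exact hj.symm

theorem mk_single_single_one (j : Fin m) :
    q (single (Finsupp.single j 1) 1) = q (single (-∑ i : Fin m, Finsupp.single i 1) t) := by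
  rw [← mul_one (q _), ← mk_single_neg_sub_single j, ← map_mul, single_mul_single, one_mul,
    add_sub_cancel]

theorem mk_single_neg_pow :
    q (single (-∑ i : Fin m, Finsupp.single i 1) t) ^ (m + 1) = algebraMap K _ t := by
  calc _ = (∏ i : Fin m, q (single (Finsupp.single i 1) 1)) *
        q (single (-∑ i : Fin m, Finsupp.single i 1) t) := by
        simp [mk_single_single_one, pow_succ]
    _ = q (single 0 t) := by
        rw [← map_prod, prod_single, ← map_mul, single_mul_single]
        simp
    _ = algebraMap K _ t := rfl

variable (m) in
noncomputable def jacobianToAdjoinRoot (ht : IsUnit t) :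
    AddMonoidAlgebra K (Fin m →₀ ℤ) ⧸ jacobianIdeal (projSpaceSuperpotential K m t) →ₐ[K]
      AdjoinRoot (X ^ (m + 1) - C t) :=
  Ideal.Quotient.liftₐ _ (diagLift (AdjoinRoot.isUnit_root_X_pow_sub_C ht m.succ_ne_zero).unit)
    fun _ ha => RingHom.mem_ker.1 <|
      jacobianIdeal_le_ker_diagLift (AdjoinRoot.root_X_pow_sub_C_pow _ _) ha

theorem jacobianToAdjoinRoot_mk_single_single (ht : IsUnit t) (i : Fin m) :
    jacobianToAdjoinRoot m ht (q (single (Finsupp.single i 1) 1)) = AdjoinRoot.root _ := by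
  change diagLift _ (single _ _) = _
  simp [diagLift_single]

theorem jacobianToAdjoinRoot_mk_single_neg (ht : IsUnit t) :
    jacobianToAdjoinRoot m ht (q (single (-∑ i : Fin m, Finsupp.single i 1) t)) =
      AdjoinRoot.root _ := by
  change diagLift _ (single _ _) = _
  simp [diagLift_single_of_pow_eq
    (u := (AdjoinRoot.isUnit_root_X_pow_sub_C ht m.succ_ne_zero).unit)
    (AdjoinRoot.root_X_pow_sub_C_pow (m + 1) t)]

variable (m t) in
noncomputable def adjoinRootToJacobian :
    AdjoinRoot (X ^ (m + 1) - C t) →ₐ[K]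
      AddMonoidAlgebra K (Fin m →₀ ℤ) ⧸ jacobianIdeal (projSpaceSuperpotential K m t) :=
  AdjoinRoot.liftAlgHom _ (Algebra.ofId K _) (q (single (-∑ i : Fin m, Finsupp.single i 1) t))
    (by simp [mk_single_neg_pow])

theorem adjoinRootToJacobian_comp_jacobianToAdjoinRoot (ht : IsUnit t) :
    (adjoinRootToJacobian m t).comp (jacobianToAdjoinRoot m ht) = AlgHom.id K _ := by
  refine Ideal.Quotient.algHom_ext _ (laurent_algHom_ext fun i => ?_)
  simp only [AlgHom.comp_apply, AlgHom.id_apply, Ideal.Quotient.mkₐ_eq_mk]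
  rw [jacobianToAdjoinRoot_mk_single_single, adjoinRootToJacobian, AdjoinRoot.liftAlgHom_root,
    mk_single_single_one]

theorem jacobianToAdjoinRoot_comp_adjoinRootToJacobian (ht : IsUnit t) :
    (jacobianToAdjoinRoot m ht).comp (adjoinRootToJacobian m t) = AlgHom.id K _ := by
  refine AdjoinRoot.algHom_ext ?_
  simp [adjoinRootToJacobian, jacobianToAdjoinRoot_mk_single_neg]

end projSpaceSuperpotential

/-- Batyrev–Givental mirror identification for `P^m`: for `t ≠ 0` in a field `K`, the
Jacobian ring `Jac(W) = K[z₁^{±1},…,z_m^{±1}]/(∂_{z₁}W,…,∂_{z_m}W)` of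
`W = z₁ + ⋯ + z_m + t·z₁⁻¹⋯z_m⁻¹` is isomorphic as a `K`-algebra to
`K[x]/(x^{m+1} − t)`, via the map sending each `z_i` to `x`. -/
theorem jacobian_ring_projective_space (K : Type*) [Field K] (m : ℕ) (t : K) (ht : t ≠ 0) :
    ∃ e : (AddMonoidAlgebra K (Fin m →₀ ℤ) ⧸
          Ideal.span (Set.range fun j => laurentDeriv j (projSpaceSuperpotential K m t)))
        ≃ₐ[K] AdjoinRoot (X ^ (m + 1) - C t),
      ∀ i : Fin m,
        e (Ideal.Quotient.mk
            (Ideal.span (Set.range fun j => laurentDeriv j (projSpaceSuperpotential K m t)))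
            (AddMonoidAlgebra.single (Finsupp.single i (1 : ℤ)) (1 : K))) =
          AdjoinRoot.root (X ^ (m + 1) - C t) :=
  ⟨AlgEquiv.ofAlgHom _ _
      (projSpaceSuperpotential.jacobianToAdjoinRoot_comp_adjoinRootToJacobian ht.isUnit)
      (projSpaceSuperpotential.adjoinRootToJacobian_comp_jacobianToAdjoinRoot ht.isUnit),
    projSpaceSuperpotential.jacobianToAdjoinRoot_mk_single_single ht.isUnit⟩
end
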